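/- arXiv:1506.01498 — 6 statements merged into one kernel-verified Lean document; each statement's English description precedes it below -/
import Mathlib

section
/- The q-binomial Möbius inversion identity: for natural numbers v ≤ u and a parameter q, the sum over i from v to u of (-1)^(i-v) * q^(binomial(i-v,2)) * (i choose v)_q * (u choose i)_q equals 1 if u = v and equals 0 if u ≠ v, where (a choose b)_q denotes the Gaussian binomial coefficient. -/
open Finset

/-- The Gaussian (q-)binomial coefficient, defined via the q-Pascal recurrence. -/
def gaussBinom {R : Type*} [CommRing R] (q : R) : ℕ → ℕ → R
  | _, 0 => 1
  | 0, _ + 1 => 0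
  | u + 1, i + 1 => gaussBinom q u i + q ^ (i + 1) * gaussBinom q u (i + 1)

open Polynomial

lemma gaussBinom_zero_right {R : Type*} [CommRing R] (q : R) (u : ℕ) :
    gaussBinom q u 0 = 1 := by cases u <;> rfl

lemma gaussBinom_eq_zero {R : Type*} [CommRing R] (q : R) :
    ∀ n i : ℕ, n < i → gaussBinom q n i = 0 := by
  intro n
  induction n with
  | zero => intro i hi; match i, hi with | i + 1, _ => rfl
  | succ n ih =>
      intro i hi
      match i, hi with
      | i + 1, hi =>
        have h1 : n < i := by omega
        have h2 : n < i + 1 := by omega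
        simp [gaussBinom, ih i h1, ih (i+1) h2]

lemma gaussBinom_self {R : Type*} [CommRing R] (q : R) (n : ℕ) :
    gaussBinom q n n = 1 := by
  induction n with
  | zero => rfl
  | succ n ih => simp [gaussBinom, ih, gaussBinom_eq_zero q n (n+1) (by omega)]

lemma gaussBinom_map {R S : Type*} [CommRing R] [CommRing S] (f : R →+* S) (q : R) :
    ∀ u i : ℕ, f (gaussBinom q u i) = gaussBinom (f q) u i := by
  intro u
  induction u with
  | zero => intro i; cases i <;> simp [gaussBinom]
  | succ u ih =>
      intro i
      cases i with
      | zero => simp [gaussBinom]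
      | succ i => simp [gaussBinom, ih]

/-- q-integer as a polynomial. -/
noncomputable def qint (n : ℕ) : ℤ[X] := ∑ j ∈ range n, X ^ j

/-- q-factorial as a polynomial. -/
noncomputable def qfact (n : ℕ) : ℤ[X] := ∏ j ∈ range n, qint (j + 1)

lemma qint_add (a b : ℕ) : qint (a + b) = qint a + X ^ a * qint b := by
  unfold qint
  rw [Finset.sum_range_add, Finset.mul_sum]
  simp [pow_add]

lemma qint_ne_zero (n : ℕ) (hn : 0 < n) : qint n ≠ 0 := by
  intro h
  have := congrArg (Polynomial.eval 1) h
  simp [qint, Polynomial.eval_finset_sum] at this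
  omega

lemma qfact_succ (n : ℕ) : qfact (n + 1) = qfact n * qint (n + 1) :=
  Finset.prod_range_succ _ n

lemma qfact_ne_zero (n : ℕ) : qfact n ≠ 0 :=
  Finset.prod_ne_zero_iff.mpr fun j _ => qint_ne_zero _ (by omega)

lemma gaussBinom_mul_qfact :
    ∀ u i : ℕ, i ≤ u → gaussBinom (X : ℤ[X]) u i * qfact i * qfact (u - i) = qfact u := by
  intro u
  induction u with
  | zero =>
      intro i hi
      interval_cases i
      simp [gaussBinom, qfact]
  | succ u ih =>
      intro i hi
      cases i with
      | zero => simp [gaussBinom_zero_right, qfact]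
      | succ j =>
        have hj : j ≤ u := by omega
        rcases eq_or_lt_of_le hj with hju | hju
        · subst hju
          simp [gaussBinom, gaussBinom_self, gaussBinom_eq_zero _ j (j+1) (by omega), qfact]
        · -- j + 1 ≤ u
          have hj1 : j + 1 ≤ u := hju
          have e1 : u + 1 - (j + 1) = u - j := by omega
          have e2 : u - j = (u - (j + 1)) + 1 := by omega
          have key : gaussBinom (X : ℤ[X]) (u+1) (j+1) * qfact (j+1) * qfact (u - j)
              = qfact u * qint (u + 1) := by
            have h1 := ih j hj
            have h2 := ih (j+1) hj1
            have hq : qint (u + 1) = qint (j + 1) + X ^ (j+1) * qint (u - j) := by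
              have : u + 1 = (j + 1) + (u - j) := by omega
              rw [this, qint_add]
            calc gaussBinom (X : ℤ[X]) (u+1) (j+1) * qfact (j+1) * qfact (u - j)
                = (gaussBinom (X : ℤ[X]) u j + X ^ (j+1) * gaussBinom (X : ℤ[X]) u (j+1))
                    * qfact (j+1) * qfact (u - j) := by rw [show gaussBinom (X : ℤ[X]) (u+1) (j+1) = gaussBinom (X : ℤ[X]) u j + X ^ (j+1) * gaussBinom (X : ℤ[X]) u (j+1) from rfl]
              _ = (gaussBinom (X : ℤ[X]) u j * qfact j * qfact (u - j)) * qint (j+1)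
                  + X ^ (j+1) * ((gaussBinom (X : ℤ[X]) u (j+1) * qfact (j+1) * qfact (u - (j+1))) * qint (u - j)) := by
                    rw [qfact_succ j, e2, qfact_succ (u - (j+1))]; ring
              _ = qfact u * qint (j+1) + X ^ (j+1) * (qfact u * qint (u - j)) := by rw [h1, h2]
              _ = qfact u * qint (u + 1) := by rw [hq]; ring
          rw [e1, key, ← qfact_succ]

lemma trinomial (u i v : ℕ) (hvi : v ≤ i) (hiu : i ≤ u) :
    gaussBinom (X : ℤ[X]) u i * gaussBinom (X : ℤ[X]) i v
      = gaussBinom (X : ℤ[X]) u v * gaussBinom (X : ℤ[X]) (u - v) (i - v) := by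
  have hD : qfact v * qfact (i - v) * qfact (u - i) ≠ 0 := by
    exact mul_ne_zero (mul_ne_zero (qfact_ne_zero v) (qfact_ne_zero _)) (qfact_ne_zero _)
  apply mul_right_cancel₀ hD
  have h1 := gaussBinom_mul_qfact u i hiu
  have h2 := gaussBinom_mul_qfact i v hvi
  have h3 := gaussBinom_mul_qfact u v (hvi.trans hiu)
  have h4 := gaussBinom_mul_qfact (u - v) (i - v) (by omega)
  have e : u - v - (i - v) = u - i := by omega
  rw [e] at h4
  calc gaussBinom (X : ℤ[X]) u i * gaussBinom (X : ℤ[X]) i v * (qfact v * qfact (i - v) * qfact (u - i))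
      = (gaussBinom (X : ℤ[X]) i v * qfact v * qfact (i - v)) * gaussBinom (X : ℤ[X]) u i * qfact (u - i) := by ring
    _ = gaussBinom (X : ℤ[X]) u i * qfact i * qfact (u - i) := by rw [h2]; ring
    _ = qfact u := h1
    _ = (gaussBinom (X : ℤ[X]) u v * qfact v * qfact (u - v)) := h3.symm
    _ = gaussBinom (X : ℤ[X]) u v * qfact v * ((gaussBinom (X : ℤ[X]) (u-v) (i-v) * qfact (i - v) * qfact (u - i))) := by rw [h4]
    _ = gaussBinom (X : ℤ[X]) u v * gaussBinom (X : ℤ[X]) (u - v) (i - v) * (qfact v * qfact (i - v) * qfact (u - i)) := by ring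

lemma alt_sum {R : Type*} [CommRing R] (q : R) (n : ℕ) :
    ∑ k ∈ range (n + 1), (-1 : R) ^ k * q ^ (k.choose 2) * gaussBinom q n k
      = if n = 0 then 1 else 0 := by
  induction n with
  | zero => simp [gaussBinom]
  | succ n ih =>
      set g : ℕ → R := fun k => (-1 : R) ^ k * q ^ ((k+1).choose 2) * gaussBinom q n k with hgdef
      have hg : ∑ k ∈ range (n + 1), g k = (∑ k ∈ range (n + 1), g (k + 1)) + 1 := by
        rw [Finset.sum_range_succ' g n, Finset.sum_range_succ (fun k => g (k+1)) n]
        have h0 : g (n + 1) = 0 := by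
          simp [hgdef, gaussBinom_eq_zero q n (n+1) (by omega)]
        have h1 : g 0 = 1 := by simp [hgdef, gaussBinom_zero_right]
        rw [h0, h1]; ring
      have hf : ∀ k, (-1 : R) ^ (k+1) * q ^ ((k+1).choose 2) * gaussBinom q (n+1) (k+1)
          = g (k + 1) - g k := by
        intro k
        have hch : (k + 2).choose 2 = (k + 1).choose 2 + (k + 1) := by
          have := Nat.choose_succ_succ (k+1) 1
          simp [Nat.choose_one_right] at this
          rw [show k + 2 = k + 1 + 1 from rfl]
          omega
        have : gaussBinom q (n+1) (k+1) = gaussBinom q n k + q ^ (k+1) * gaussBinom q n (k+1) := rfl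
        rw [this, hgdef]
        simp only [hch, pow_add, pow_succ]
        ring
      rw [Finset.sum_range_succ' (fun k => (-1 : R) ^ k * q ^ (k.choose 2) * gaussBinom q (n+1) k) (n+1)]
      have hsum : ∑ k ∈ range (n + 1), (-1 : R) ^ (k+1) * q ^ ((k+1).choose 2) * gaussBinom q (n+1) (k+1)
          = ∑ k ∈ range (n + 1), (g (k + 1) - g k) := Finset.sum_congr rfl fun k _ => hf k
      rw [hsum, Finset.sum_sub_distrib]
      have h1 : (-1 : R) ^ 0 * q ^ (Nat.choose 0 2) * gaussBinom q (n+1) 0 = 1 := by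
        simp [gaussBinom_zero_right]
      rw [h1]
      have := hg
      simp only [if_neg (Nat.succ_ne_zero n)]
      linear_combination -this

lemma main_poly (u v : ℕ) (h : v ≤ u) :
    ∑ i ∈ Icc v u, (-1 : ℤ[X]) ^ (i - v) * X ^ (Nat.choose (i - v) 2) *
        gaussBinom (X : ℤ[X]) i v * gaussBinom (X : ℤ[X]) u i
      = if u = v then 1 else 0 := by
  rw [← Finset.Ico_add_one_right_eq_Icc, Finset.sum_Ico_eq_sum_range]
  have hstep : ∀ k ∈ range (u + 1 - v),
      (-1 : ℤ[X]) ^ (v + k - v) * X ^ (Nat.choose (v + k - v) 2) *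
        gaussBinom (X : ℤ[X]) (v + k) v * gaussBinom (X : ℤ[X]) u (v + k)
      = gaussBinom (X : ℤ[X]) u v * ((-1 : ℤ[X]) ^ k * X ^ (k.choose 2) * gaussBinom (X : ℤ[X]) (u - v) k) := by
    intro k hk
    simp only [mem_range] at hk
    have hk' : v + k ≤ u := by omega
    have e : v + k - v = k := by omega
    have e2 : v + k - v = k := e
    rw [e]
    have ht := trinomial u (v + k) v (by omega) hk'
    rw [show v + k - v = k from e] at ht
    calc (-1 : ℤ[X]) ^ k * X ^ (k.choose 2) * gaussBinom (X : ℤ[X]) (v + k) v * gaussBinom (X : ℤ[X]) u (v + k)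
        = (-1 : ℤ[X]) ^ k * X ^ (k.choose 2) * (gaussBinom (X : ℤ[X]) u (v+k) * gaussBinom (X : ℤ[X]) (v+k) v) := by ring
      _ = (-1 : ℤ[X]) ^ k * X ^ (k.choose 2) * (gaussBinom (X : ℤ[X]) u v * gaussBinom (X : ℤ[X]) (u - v) k) := by rw [ht]
      _ = gaussBinom (X : ℤ[X]) u v * ((-1 : ℤ[X]) ^ k * X ^ (k.choose 2) * gaussBinom (X : ℤ[X]) (u - v) k) := by ring
  rw [Finset.sum_congr rfl hstep, ← Finset.mul_sum]
  have e3 : u + 1 - v = (u - v) + 1 := by omega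
  rw [e3, alt_sum (X : ℤ[X]) (u - v)]
  by_cases huv : u = v
  · subst huv
    simp [gaussBinom_self]
  · have : u - v ≠ 0 := by omega
    simp [this, huv]

/-- The q-binomial Möbius inversion identity. -/
theorem q_binomial_mobius_inversion (q : ℤ) (u v : ℕ) (h : v ≤ u) :
    ∑ i ∈ Icc v u, (-1 : ℤ) ^ (i - v) * q ^ (Nat.choose (i - v) 2) *
        gaussBinom q i v * gaussBinom q u i =
      if u = v then 1 else 0 := by
  have key : ∀ a b : ℕ, Polynomial.eval q (gaussBinom (X : ℤ[X]) a b) = gaussBinom q a b := by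
    intro a b
    have := gaussBinom_map (Polynomial.evalRingHom q) (X : ℤ[X]) a b
    simpa using this
  have h2 : Polynomial.eval q (∑ i ∈ Icc v u, (-1 : ℤ[X]) ^ (i - v) * X ^ (Nat.choose (i - v) 2) *
        gaussBinom (X : ℤ[X]) i v * gaussBinom (X : ℤ[X]) u i)
      = ∑ i ∈ Icc v u, (-1 : ℤ) ^ (i - v) * q ^ (Nat.choose (i - v) 2) *
        gaussBinom q i v * gaussBinom q u i := by
    rw [Polynomial.eval_finset_sum]
    refine Finset.sum_congr rfl fun i _ => ?_
    simp [key]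
  rw [← h2, main_poly u v h]
  split <;> simp
end

section
/- Let m, d, e be positive integers with e = gcd(m,d). Then any basis of F_{2^m} over F_{2^e} is also a basis of F_{2^{md/e}} over F_{2^d}, where F_{2^m} is viewed inside F_{2^{md/e}} via the natural embedding. -/
/-!
Since `e ∣ d`, every element of `E` is fixed by `x ↦ x ^ 2 ^ d`, so inside `L` the scalars from `E`
are scalars from `D`; hence the `D`-span of the basis contains `K`, and so it is the `D`-subalgebra
generated by `K`. That subalgebra has order `2 ^ k` with both `m ∣ k` and `d ∣ k` (it is a vector
space over copies of `K` and `D`), so `k = lcm m d` and it is all of `L`. A spanning family of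
`[K : E] = m / e = [L : D]` vectors is then a basis.
-/

open Polynomial Module

theorem FiniteField.mem_range_algebraMap_of_pow_card_eq {D L : Type*} [Field D] [Fintype D]
    [CommRing L] [IsDomain L] [Algebra D L] {x : L} (hx : x ^ Fintype.card D = x) :
    x ∈ (algebraMap D L).range := by
  have hsplits : (X ^ Fintype.card D - X : D[X]).Splits := by
    rw [splits_iff_card_roots, roots_X_pow_card_sub_X, X_pow_card_sub_X_natDegree_eq _
      Fintype.one_lt_card]
    rfl
  exact hsplits.mem_range_of_isRoot (X_pow_card_sub_X_ne_zero _ Fintype.one_lt_card)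
    (by simp [hx])

theorem FiniteField.range_algebraMap_subset_of_card_eq_pow {E D L : Type*} [Field E] [Fintype E]
    [Field D] [Fintype D] [CommRing L] [IsDomain L] [Algebra E L] [Algebra D L] {p e d : ℕ}
    (hE : Fintype.card E = p ^ e) (hD : Fintype.card D = p ^ d) (hed : e ∣ d) :
    Set.range (algebraMap E L) ⊆ Set.range (algebraMap D L) := by
  rintro _ ⟨c, rfl⟩
  refine mem_range_algebraMap_of_pow_card_eq ?_
  obtain ⟨k, rfl⟩ := hed
  rw [← map_pow, hD, pow_mul, ← hE, pow_card_pow]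

theorem Submodule.range_algebraMap_subset_span_basis {ι E K D L : Type*} [CommSemiring E]
    [CommSemiring K] [CommSemiring D] [Semiring L] [Algebra E K] [Algebra E L] [Algebra K L]
    [IsScalarTower E K L] [Algebra D L] (b : Basis ι E K)
    (hED : Set.range (algebraMap E L) ⊆ Set.range (algebraMap D L)) :
    Set.range (algebraMap K L) ⊆ span D (Set.range fun i ↦ algebraMap K L (b i)) := by
  set S := span D (Set.range fun i ↦ algebraMap K L (b i))
  let S' : Submodule E L :=
    { S.toAddSubmonoid with
      smul_mem' c v hv := by
        obtain ⟨δ, hδ⟩ := hED ⟨c, rfl⟩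
        rw [Algebra.smul_def, ← hδ, ← Algebra.smul_def]
        exact S.smul_mem δ hv }
  rintro _ ⟨x, rfl⟩
  have hx := apply_mem_span_image_of_mem_span (IsScalarTower.toAlgHom E K L).toLinearMap
    (b.mem_span x)
  rw [← Set.range_comp] at hx
  exact span_le (p := S').mpr subset_span hx

theorem FiniteField.dvd_of_ringHom_of_card_eq_pow {K R : Type*} [Field K] [Fintype K] [CommRing R]
    [Fintype R] (f : K →+* R) {p m k : ℕ} (hp : 2 ≤ p) (hK : Fintype.card K = p ^ m)
    (hR : Fintype.card R = p ^ k) : m ∣ k := by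
  let _ := f.toAlgebra
  have hcard : Fintype.card R = Fintype.card K ^ finrank K R := card_eq_pow_finrank
  rw [hK, hR, ← pow_mul] at hcard
  exact ⟨_, Nat.pow_right_injective hp hcard⟩

theorem Module.finrank_eq_of_card_eq_pow_mul {K V : Type*} [Field K] [Fintype K] [AddCommGroup V]
    [Module K V] [Fintype V] {p k n : ℕ} (hp : 2 ≤ p) (hk : k ≠ 0) (hK : Fintype.card K = p ^ k)
    (hV : Fintype.card V = p ^ (k * n)) : finrank K V = n := by
  have hcard : Fintype.card V = Fintype.card K ^ finrank K V := card_eq_pow_finrank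
  rw [hK, hV, ← pow_mul] at hcard
  exact (Nat.eq_of_mul_eq_mul_left (Nat.pos_of_ne_zero hk) (Nat.pow_right_injective hp hcard)).symm

theorem FiniteField.span_range_ringHom_eq_top_of_card_eq_pow_lcm {K D L : Type*} [Field K]
    [Fintype K] [Field D] [Fintype D] [Field L] [Fintype L] [Algebra D L] {p m d : ℕ} (hp : 2 ≤ p)
    (hK : Fintype.card K = p ^ m) (hD : Fintype.card D = p ^ d)
    (hL : Fintype.card L = p ^ Nat.lcm m d) (f : K →+* L) :
    Submodule.span D (Set.range f) = ⊤ := by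
  set A := Algebra.adjoin D (Set.range f)
  have hA : Subalgebra.toSubmodule A = Submodule.span D (Set.range f) := by
    rw [Algebra.adjoin_eq_span, ← MonoidHom.coe_mrange, Submonoid.closure_eq]
  let _ : Fintype A := Fintype.ofFinite A
  set k := d * finrank D A
  have hcardA : Fintype.card A = p ^ k := by rw [card_eq_pow_finrank (K := D), hD, pow_mul]
  have hmk : m ∣ k := dvd_of_ringHom_of_card_eq_pow
    (f.codRestrict A fun x ↦ Algebra.subset_adjoin ⟨x, rfl⟩) hp hK hcardA
  have hdk : d ∣ k := dvd_of_ringHom_of_card_eq_pow (algebraMap D A) hp hD hcardA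
  have hk : k ≠ 0 := by
    intro hk
    have : 1 < Fintype.card A := Fintype.one_lt_card
    simp [hcardA, hk] at this
  have hk_le : k ≤ Nat.lcm m d := by
    have hcard_le : Fintype.card A ≤ Fintype.card L := Fintype.card_subtype_le _
    rwa [hcardA, hL, Nat.pow_le_pow_iff_right hp] at hcard_le
  have hk_eq : k = Nat.lcm m d :=
    le_antisymm hk_le (Nat.le_of_dvd (Nat.pos_of_ne_zero hk) (Nat.lcm_dvd hmk hdk))
  have hcard_eq : Nat.card L ≤ Nat.card (A : Set L) := by
    simp only [SetLike.coe_sort_coe, Nat.card_eq_fintype_card, hL, hcardA, hk_eq, le_refl]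
  rw [← hA, Algebra.toSubmodule_eq_top, ← SetLike.coe_set_eq, Algebra.coe_top]
  exact Set.eq_top_of_card_le_of_finite hcard_eq

/-- Let `e = gcd(m,d)`. Inside `L = F_{2^{md/e}}`, any basis of `K = F_{2^m}`
over `E = F_{2^e}` is also a basis of `L` over `D = F_{2^d}`. -/
theorem basis_over_subfield_is_basis_over_other
    (m d e : ℕ) (hm : 0 < m) (hd : 0 < d) (he : e = Nat.gcd m d)
    (E K D L : Type*) [Field E] [Field K] [Field D] [Field L]
    [Algebra E K] [Algebra E L] [Algebra K L] [IsScalarTower E K L] [Algebra D L]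
    [Fintype E] [Fintype K] [Fintype D] [Fintype L]
    (hE : Fintype.card E = 2 ^ e) (hK : Fintype.card K = 2 ^ m)
    (hD : Fintype.card D = 2 ^ d) (hL : Fintype.card L = 2 ^ (m * d / e))
    {ι : Type*} (b : Module.Basis ι E K) :
    LinearIndependent D (fun i => algebraMap K L (b i)) ∧
      Submodule.span D (Set.range fun i => algebraMap K L (b i)) = ⊤ := by
  subst he
  have hspan : Submodule.span D (Set.range fun i ↦ algebraMap K L (b i)) = ⊤ := by
    refine eq_top_iff.mpr ?_
    rw [← FiniteField.span_range_ringHom_eq_top_of_card_eq_pow_lcm le_rfl hK hD hL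
      (algebraMap K L)]
    exact Submodule.span_le.mpr (Submodule.range_algebraMap_subset_span_basis b
      (FiniteField.range_algebraMap_subset_of_card_eq_pow hE hD (Nat.gcd_dvd_right m d)))
  have hgcd : Nat.gcd m d ≠ 0 := (Nat.gcd_pos_of_pos_left d hm).ne'
  have hm_eq : m = Nat.gcd m d * (m / Nat.gcd m d) :=
    (Nat.mul_div_cancel' (Nat.gcd_dvd_left m d)).symm
  have hlcm_eq : m * d / Nat.gcd m d = d * (m / Nat.gcd m d) := by
    rw [mul_comm, Nat.mul_div_assoc _ (Nat.gcd_dvd_left m d)]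
  have hrankK : finrank E K = m / Nat.gcd m d :=
    finrank_eq_of_card_eq_pow_mul le_rfl hgcd hE (hm_eq ▸ hK)
  have hrankL : finrank D L = m / Nat.gcd m d :=
    finrank_eq_of_card_eq_pow_mul le_rfl hd.ne' hD (hlcm_eq ▸ hL)
  have : Finite ι := .of_injective b b.injective
  let _ : Fintype ι := .ofFinite ι
  have hcard : Fintype.card ι = finrank D L := by
    rw [hrankL, ← hrankK, finrank_eq_card_basis b]
  exact ⟨linearIndependent_of_top_le_span_of_card_eq_finrank hspan.ge hcard, hspan⟩
end

section
/- Let m, d, e, k be positive integers with e = gcd(m,d) = gcd(m,2d) and 2 ≤ k ≤ (m+e)/(2e). Let a_1, ..., a_{k-1} ∈ F_{2^m}, not all zero. Then the set of x in F_{2^m} satisfying the equation Σ_{j=1}^{k-1} (a_j^{2^{-jd}} x^{2^{-jd}} + a_j x^{2^{jd}}) = 0 (where exponentiation by 2^{-jd} means applying the inverse of the jd-th power of the Frobenius) is an F_{2^e}-subspace of F_{2^m} of dimension at most 2(k-1). -/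
/-!
Raising the equation to the power `2 ^ ((k - 1) d)` turns it into `∑_{i ≤ 2(k-1)} cᵢ σⁱ(x) = 0`
with `σ = x ↦ x ^ 2 ^ d` and some `cᵢ ≠ 0`. As `gcd(m, d) = e`, the fixed field of `σ` is
`F_{2^e}`. Over such a field, the kernel of a `σ`-linearized polynomial `L` of degree `n` has
dimension at most `n`: for a nonzero root `u`, `x ↦ L(u x)` factors as `M ∘ (σ - 1)` with `M` of
degree `n - 1`, and `ker (σ - 1)` is the one-dimensional fixed field.
-/

open Finset Polynomial Module

theorem LinearMap.finrank_ker_comp_le {R V W U : Type*} [DivisionRing R] [AddCommGroup V]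
    [AddCommGroup W] [AddCommGroup U] [Module R V] [Module R W] [Module R U]
    [FiniteDimensional R V] [FiniteDimensional R W] (D : V →ₗ[R] W) (g : W →ₗ[R] U) :
    finrank R (ker (g ∘ₗ D)) ≤ finrank R (ker g) + finrank R (ker D) := by
  set D' := D.domRestrict (ker (g ∘ₗ D))
  have hrange : range D' ≤ ker g := by
    rintro _ ⟨⟨x, hx⟩, rfl⟩
    exact hx
  have hker : finrank R (ker D') ≤ finrank R (ker D) := by
    rw [ker_domRestrict, ← Submodule.finrank_map_subtype_eq]
    exact Submodule.finrank_mono (Submodule.map_comap_le _ _)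
  have := D'.finrank_range_add_finrank_ker
  have := Submodule.finrank_mono hrange
  omega

namespace AlgEquiv

variable {F K : Type*} [Field F] [Field K] [Algebra F K] (σ : K ≃ₐ[F] K)

/-- The `σ`-linearized polynomial `x ↦ ∑ pᵢ σⁱ(x)` of `p = ∑ pᵢ Xⁱ`. -/
noncomputable def linearizedPoly : K[X] →ₗ[K] End F K :=
  Polynomial.lsum fun n => LinearMap.toSpanSingleton K _ (σ ^ n).toLinearMap

theorem linearizedPoly_monomial_apply (n : ℕ) (a x : K) :
    σ.linearizedPoly (monomial n a) x = a * (σ ^ n) x := by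
  simp [linearizedPoly]

theorem linearizedPoly_apply_eq_sum_range {p : K[X]} {n : ℕ} (hn : p.natDegree < n) (x : K) :
    σ.linearizedPoly p x = ∑ i ∈ range n, p.coeff i * (σ ^ i) x := by
  simp [linearizedPoly, Polynomial.lsum_apply, sum_over_range' _ _ n hn, LinearMap.sum_apply]

variable {σ}

/-- With `q_j = ∑_{j < i ≤ n+1} p_i σ^i(u)`, this is `σ^i y - y = ∑_{j < i} σ^j (σ y - y)`
summed against `p_i σ^i(u)`, using `∑ p_i σ^i(u) = 0`. -/
theorem exists_linearizedPoly_mul_eq_linearizedPoly_sub {p : K[X]} {n : ℕ}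
    (hp : p.natDegree ≤ n + 1) {u : K} (hu : σ.linearizedPoly p u = 0) :
    ∃ q : K[X], q.natDegree ≤ n ∧ q.coeff n = p.coeff (n + 1) * (σ ^ (n + 1)) u ∧
      ∀ y, σ.linearizedPoly p (u * y) = σ.linearizedPoly q (σ y - y) := by
  set c : ℕ → K := fun i => p.coeff i * (σ ^ i) u
  have hdeg : p.natDegree < n + 2 := by omega
  refine ⟨∑ j ∈ range (n + 1), monomial j (∑ i ∈ Ioc j (n + 1), c i), ?_, ?_, fun y => ?_⟩
  · refine natDegree_sum_le_of_forall_le _ _ fun j hj => (natDegree_monomial_le _).trans ?_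
    rw [mem_range] at hj
    omega
  · simp [finsetSum_coeff, coeff_monomial, c]
  · have hc : ∑ i ∈ range (n + 2), c i = 0 := by
      rwa [linearizedPoly_apply_eq_sum_range σ hdeg] at hu
    simp only [linearizedPoly_apply_eq_sum_range σ hdeg, map_sum, LinearMap.sum_apply,
      linearizedPoly_monomial_apply, map_sub, ← AlgEquiv.mul_apply, ← pow_succ, map_mul]
    calc ∑ i ∈ range (n + 2), p.coeff i * ((σ ^ i) u * (σ ^ i) y)
        = ∑ i ∈ range (n + 2), c i * ((σ ^ i) y - y) := by
          rw [← sub_zero (∑ i ∈ range (n + 2), _), ← zero_mul y, ← hc, sum_mul,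
            ← sum_sub_distrib]
          exact sum_congr rfl fun i _ => by simp only [c]; ring
      _ = ∑ i ∈ range (n + 2), ∑ j ∈ range i, c i * ((σ ^ (j + 1)) y - (σ ^ j) y) := by
          simp_rw [← mul_sum, sum_range_sub (fun j => (σ ^ j) y), pow_zero, one_apply]
      _ = ∑ j ∈ range (n + 1), ∑ i ∈ Ioc j (n + 1), c i * ((σ ^ (j + 1)) y - (σ ^ j) y) :=
          sum_comm' fun i j => by simp only [mem_range, mem_Ioc]; omega
      _ = _ := by simp_rw [← sum_mul, mul_sub, sum_sub_distrib]

theorem finrank_ker_linearizedPoly_le [FiniteDimensional F K]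
    (hσ : ∀ x, σ x = x → x ∈ Set.range (algebraMap F K)) {p : K[X]} (hp : p ≠ 0) {n : ℕ}
    (hn : p.natDegree ≤ n) : finrank F (LinearMap.ker (σ.linearizedPoly p)) ≤ n := by
  induction n generalizing p with
  | zero =>
    obtain ⟨a, rfl⟩ : ∃ a, p = C a := ⟨_, eq_C_of_natDegree_le_zero hn⟩
    have ha : a ≠ 0 := C_ne_zero.mp hp
    have : LinearMap.ker (σ.linearizedPoly (C a)) = ⊥ :=
      LinearMap.ker_eq_bot'.mpr fun x hx => by
        rw [← monomial_zero_left, linearizedPoly_monomial_apply] at hx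
        simpa [ha] using hx
    rw [this, finrank_bot]
  | succ n ih =>
    rcases hn.lt_or_eq with hlt | hdeg
    · exact (ih hp (Nat.lt_succ_iff.mp hlt)).trans n.le_succ
    rcases eq_or_ne (LinearMap.ker (σ.linearizedPoly p)) ⊥ with hker | hker
    · rw [hker, finrank_bot]
      exact Nat.zero_le _
    obtain ⟨u, hu, hu0⟩ := Submodule.exists_mem_ne_zero_of_ne_bot hker
    obtain ⟨q, hqdeg, hqcoeff, hq⟩ := exists_linearizedPoly_mul_eq_linearizedPoly_sub hn hu
    have hq0 : q ≠ 0 := by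
      rintro rfl
      have hlead := leadingCoeff_ne_zero.mpr hp
      rw [leadingCoeff, hdeg] at hlead
      exact mul_ne_zero hlead ((_root_.map_ne_zero _).mpr hu0)
        (hqcoeff.symm.trans (coeff_zero n))
    let D : K →ₗ[F] K := (σ.toLinearMap - LinearMap.id) ∘ₗ LinearMap.mulLeft F u⁻¹
    have hfactor :
        LinearMap.ker (σ.linearizedPoly p) ≤ LinearMap.ker (σ.linearizedPoly q ∘ₗ D) := by
      intro x hx
      change σ.linearizedPoly q (σ (u⁻¹ * x) - u⁻¹ * x) = 0
      rwa [← hq, mul_inv_cancel_left₀ hu0]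
    have hD : finrank F (LinearMap.ker D) ≤ 1 := by
      refine (Submodule.finrank_mono fun x hx => ?_).trans (finrank_span_singleton hu0).le
      obtain ⟨r, hr⟩ := hσ _ (sub_eq_zero.mp hx)
      refine Submodule.mem_span_singleton.mpr ⟨r, ?_⟩
      rw [Algebra.smul_def, mul_comm, hr, LinearMap.mulLeft_apply, mul_inv_cancel_left₀ hu0]
    calc finrank F (LinearMap.ker (σ.linearizedPoly p))
        ≤ finrank F (LinearMap.ker (σ.linearizedPoly q ∘ₗ D)) := Submodule.finrank_mono hfactor
      _ ≤ finrank F (LinearMap.ker (σ.linearizedPoly q)) + finrank F (LinearMap.ker D) :=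
          LinearMap.finrank_ker_comp_le D _
      _ ≤ n + 1 := add_le_add (ih hq0 hqdeg) hD

end AlgEquiv

theorem iterate_frobeniusEquiv_symm_pow_p_pow_add {R : Type*} [CommSemiring R] {p : ℕ}
    [ExpChar R p] [PerfectRing R p] (x : R) (n l : ℕ) :
    ((frobeniusEquiv R p).symm^[n] x) ^ p ^ (n + l) = x ^ p ^ l := by
  rw [pow_add, pow_mul, iterate_frobeniusEquiv_symm_pow_p_pow]

section RadicalPoly

variable {K : Type*} [Field K] (p d k : ℕ) (a : ℕ → K)

/-- The coefficients, as a polynomial in `σ = x ↦ x ^ p ^ d`, of the equation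
`∑_{j=1}^{k-1} (σ^{-j}(a_j x) + a_j σ^j(x)) = 0` raised to the power `p ^ ((k - 1) * d)`. -/
noncomputable def radicalPoly : K[X] :=
  ∑ j ∈ Icc 1 (k - 1),
    (monomial (k - 1 - j) (a j ^ p ^ ((k - 1 - j) * d)) +
      monomial (k - 1 + j) (a j ^ p ^ ((k - 1) * d)))

theorem radicalPoly_natDegree_le : (radicalPoly p d k a).natDegree ≤ 2 * (k - 1) :=
  natDegree_sum_le_of_forall_le _ _ fun j hj => by
    rw [mem_Icc] at hj
    exact natDegree_add_le_of_degree_le ((natDegree_monomial_le _).trans (by omega))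
      ((natDegree_monomial_le _).trans (by omega))

variable {p d k a}

theorem radicalPoly_coeff {j₀ : ℕ} (hj₀ : j₀ ∈ Icc 1 (k - 1)) :
    (radicalPoly p d k a).coeff (k - 1 + j₀) = a j₀ ^ p ^ ((k - 1) * d) := by
  rw [mem_Icc] at hj₀
  rw [radicalPoly, finsetSum_coeff, sum_eq_single j₀]
  · simp only [coeff_add, coeff_monomial, if_true, add_eq_right]
    exact if_neg (by omega)
  · intro j hj hne
    rw [mem_Icc] at hj
    simp only [coeff_add, coeff_monomial, add_right_inj, hne, if_false, add_zero]
    exact if_neg (by omega)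
  · exact fun h => absurd (mem_Icc.mpr hj₀) h

theorem radicalPoly_ne_zero (ha : ∃ j ∈ Icc 1 (k - 1), a j ≠ 0) :
    radicalPoly p d k a ≠ 0 := by
  obtain ⟨j₀, hj₀, haj₀⟩ := ha
  intro h
  have := radicalPoly_coeff (p := p) (d := d) (a := a) hj₀
  rw [h, coeff_zero] at this
  exact pow_ne_zero _ haj₀ this.symm

theorem linearizedPoly_radicalPoly_apply {F : Type*} [Field F] [Algebra F K] [ExpChar K p]
    [PerfectRing K p] {σ : K ≃ₐ[F] K} (hσ : ∀ (i : ℕ) (x : K), (σ ^ i) x = x ^ p ^ (i * d))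
    (x : K) :
    σ.linearizedPoly (radicalPoly p d k a) x =
      (∑ j ∈ Icc 1 (k - 1), ((frobeniusEquiv K p).symm^[j * d] (a j) *
        (frobeniusEquiv K p).symm^[j * d] x + a j * x ^ p ^ (j * d))) ^ p ^ ((k - 1) * d) := by
  simp only [radicalPoly, map_sum, map_add, LinearMap.sum_apply, LinearMap.add_apply,
    AlgEquiv.linearizedPoly_monomial_apply, hσ, sum_pow_char_pow]
  refine sum_congr rfl fun j hj => ?_
  have hsplit : (k - 1) * d = j * d + (k - 1 - j) * d := by
    rw [mem_Icc] at hj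
    rw [← add_mul, Nat.add_sub_cancel' hj.2]
  rw [add_pow_expChar_pow, mul_pow, mul_pow, hsplit, iterate_frobeniusEquiv_symm_pow_p_pow_add,
    iterate_frobeniusEquiv_symm_pow_p_pow_add, ← pow_mul, ← pow_add, ← hsplit,
    show j * d + (k - 1) * d = (k - 1 + j) * d by ring]

end RadicalPoly

theorem pow_pow_gcd_eq_self {M : Type*} [Monoid M] {x : M} {k m n : ℕ} (hm : x ^ k ^ m = x)
    (hn : x ^ k ^ n = x) : x ^ k ^ m.gcd n = x := by
  simp only [← congr_fun (pow_iterate k _) x] at hm hn ⊢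
  exact Function.IsPeriodicPt.gcd hm hn

namespace FiniteField

variable {F K : Type*} [Field F] [Field K] [Algebra F K] [Fintype F]

theorem mem_range_algebraMap_of_pow_card_eq_s3 [Finite K] {x : K} (hx : x ^ Fintype.card F = x) :
    x ∈ Set.range (algebraMap F K) := by
  rw [IsGalois.mem_range_algebraMap_iff_fixed]
  intro g
  obtain ⟨i, rfl⟩ := (bijective_frobeniusAlgEquivOfAlgebraic_pow F K).surjective g
  rw [AlgEquiv.coe_pow, coe_frobeniusAlgEquivOfAlgebraic]
  exact Function.iterate_fixed hx i

theorem frobeniusAlgEquivOfAlgebraic_pow_apply [Finite K] (n : ℕ) (x : K) :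
    (frobeniusAlgEquivOfAlgebraic F K ^ n) x = x ^ Fintype.card F ^ n := by
  rw [AlgEquiv.coe_pow, coe_frobeniusAlgEquivOfAlgebraic_iterate]

theorem mem_range_algebraMap_of_pow_pow_eq [Fintype K] {p e m d : ℕ}
    (hF : Fintype.card F = p ^ e) (hK : Fintype.card K = p ^ m) (he : e = m.gcd d) {x : K}
    (hx : x ^ p ^ d = x) : x ∈ Set.range (algebraMap F K) :=
  mem_range_algebraMap_of_pow_card_eq_s3 <| hF ▸ he ▸ pow_pow_gcd_eq_self (hK ▸ pow_card x) hx

end FiniteField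

theorem radical_dim_le_general (m d e k : ℕ)
    (he1 : e = Nat.gcd m d)
    (F K : Type*) [Field F] [Field K] [Algebra F K] [Fintype F] [Fintype K]
    [CharP K 2]
    (hF : Fintype.card F = 2 ^ e) (hK : Fintype.card K = 2 ^ m)
    (a : ℕ → K) (ha : ∃ j ∈ Finset.Icc 1 (k - 1), a j ≠ 0) :
    ∃ W : Submodule F K,
      (W : Set K) =
        {x : K | ∑ j ∈ Finset.Icc 1 (k - 1),
          (((frobeniusEquiv K 2).symm)^[j * d] (a j) *
              ((frobeniusEquiv K 2).symm)^[j * d] x + a j * x ^ (2 ^ (j * d))) = 0} ∧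
      Module.finrank F W ≤ 2 * (k - 1) := by
  have hed : e ∣ d := he1 ▸ Nat.gcd_dvd_right m d
  let σ : K ≃ₐ[F] K := FiniteField.frobeniusAlgEquivOfAlgebraic F K ^ (d / e)
  have hσ (i : ℕ) (x : K) : (σ ^ i) x = x ^ 2 ^ (i * d) := by
    rw [← pow_mul, FiniteField.frobeniusAlgEquivOfAlgebraic_pow_apply, hF, ← pow_mul,
      ← mul_assoc, Nat.mul_div_cancel' hed, mul_comm]
  have hfix (x : K) (hx : σ x = x) : x ∈ Set.range (algebraMap F K) := by
    rw [← pow_one σ, hσ, one_mul] at hx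
    exact FiniteField.mem_range_algebraMap_of_pow_pow_eq hF hK he1 hx
  refine ⟨LinearMap.ker (σ.linearizedPoly (radicalPoly 2 d k a)), ?_,
    σ.finrank_ker_linearizedPoly_le hfix (radicalPoly_ne_zero ha) (radicalPoly_natDegree_le ..)⟩
  ext x
  simp [linearizedPoly_radicalPoly_apply hσ, pow_eq_zero_iff]

/-- If `a_1, …, a_{k-1} ∈ F_{2^m}` are not all zero, the solution set of
`Σ_{j=1}^{k-1} (a_j^{2^{-jd}} x^{2^{-jd}} + a_j x^{2^{jd}}) = 0` is an
`F_{2^e}`-subspace of `F_{2^m}` of dimension at most `2(k-1)`. -/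
theorem radical_dim_le (m d e k : ℕ) (hm : 0 < m) (hd : 0 < d) (he : 0 < e)
    (he1 : e = Nat.gcd m d) (he2 : e = Nat.gcd m (2 * d))
    (hk1 : 2 ≤ k) (hk2 : k ≤ (m + e) / (2 * e))
    (F K : Type*) [Field F] [Field K] [Algebra F K] [Fintype F] [Fintype K]
    [CharP K 2]
    (hF : Fintype.card F = 2 ^ e) (hK : Fintype.card K = 2 ^ m)
    (a : ℕ → K) (ha : ∃ j ∈ Finset.Icc 1 (k - 1), a j ≠ 0) :
    ∃ W : Submodule F K,
      (W : Set K) =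
        {x : K | ∑ j ∈ Finset.Icc 1 (k - 1),
          (((frobeniusEquiv K 2).symm)^[j * d] (a j) *
              ((frobeniusEquiv K 2).symm)^[j * d] x + a j * x ^ (2 ^ (j * d))) = 0} ∧
      Module.finrank F W ≤ 2 * (k - 1) :=
  radical_dim_le_general m d e k he1 F K hF hK a ha
end

section
/- Let K be a finite field of characteristic 2 with |K| = 2^m, let e divide m, and let Q : K → F_{2^e} be a function such that B(x,y) := Q(x+y) + Q(x) + Q(y) is F_{2^e}-bilinear. Then the exponential sum S = Σ_{x ∈ K} (-1)^{Tr_{F_{2^e}/F_2}(Q(x))} satisfies: S = 0 if the rank r of the quadratic form Q is odd, and S = ± 2^{m - e·r/2} if r is even. -/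
/-!
With `ψ a = (-1)^{Tr a}` and `B` the polar form of `Q`, substituting `x = z + y` in `S²` gives
`S² = |K| · ∑_{z ∈ rad B} ψ(Q z)`: the inner sum of the linear character `y ↦ ψ(B z y)` vanishes
unless `z` lies in the radical. On `rad B` the map `Q` is additive with kernel the subspace `W`,
so either `Q` vanishes on `rad B` (and `W = rad B`), or `a ↦ Q (a • z)` is an injective, hence
bijective, additive self-map of `F` for any `z ∉ W`, making `W` a hyperplane of `rad B` and the
radical sum `0`. In characteristic 2 the polar form is alternating, so its rank
`dim K - dim rad B` is even; this fixes the parity of `r`, and in the even case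
`S² = 2^m · 2^{e · dim rad B} = (2^{m - e r/2})²`.
-/

open Module Finset

namespace LinearMap.BilinForm

variable {K V : Type*} [Field K] [AddCommGroup V] [Module K V]

theorem IsAlt.eq_zero_of_apply_smul_add_smul_eq_zero {B : LinearMap.BilinForm K V} (hB : B.IsAlt)
    {x y : V} (hxy : B x y ≠ 0) {s t : K} (hx : B x (s • x + t • y) = 0)
    (hy : B y (s • x + t • y) = 0) : s = 0 ∧ t = 0 := by
  have hyx : B y x = -B x y := (LinearMap.IsAlt.neg hB x y).symm
  simp only [map_add, map_smul, smul_eq_mul, hB.self_eq_zero, hyx, mul_zero, zero_add, add_zero,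
    mul_neg, neg_eq_zero, mul_eq_zero] at hx hy
  exact ⟨hy.resolve_right hxy, hx.resolve_right hxy⟩

theorem IsAlt.even_finrank_of_nondegenerate [FiniteDimensional K V] {B : LinearMap.BilinForm K V}
    (hB : B.IsAlt) (hnd : B.Nondegenerate) : Even (finrank K V) := by
  induction hn : finrank K V using Nat.strong_induction_on generalizing V B with
  | _ n ih =>
  obtain rfl | hpos := Nat.eq_zero_or_pos n
  · exact Even.zero
  obtain ⟨x, hx⟩ := finrank_pos_iff_exists_ne_zero.mp (hn ▸ hpos)
  obtain ⟨y, hxy⟩ : ∃ y, B x y ≠ 0 := by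
    by_contra! h
    exact hx (hnd.1 x h)
  have hrefl := hB.isRefl
  -- `P` is a hyperbolic plane, so `V = P ⊕ Pᗮ` with `B` nondegenerate on `Pᗮ`.
  set P := Submodule.span K {x, y}
  have hxP : x ∈ P := Submodule.subset_span (by simp)
  have hyP : y ∈ P := Submodule.subset_span (by simp)
  have hP : finrank K P = 2 := by
    have hli : LinearIndependent K ![x, y] := LinearIndependent.pair_iff.mpr fun s t hst =>
      hB.eq_zero_of_apply_smul_add_smul_eq_zero hxy (by rw [hst, map_zero])
        (by rw [hst, map_zero])
    have := finrank_span_eq_card hli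
    rwa [Matrix.range_cons_cons_empty, Fintype.card_fin] at this
  have hdisj : Disjoint P (B.orthogonal P) := by
    rw [Submodule.disjoint_def]
    intro z hzP hzO
    obtain ⟨s, t, rfl⟩ := Submodule.mem_span_pair.mp hzP
    obtain ⟨rfl, rfl⟩ := hB.eq_zero_of_apply_smul_add_smul_eq_zero hxy (hzO x hxP) (hzO y hyP)
    simp
  have hcompl : IsCompl P (B.orthogonal P) :=
    isCompl_orthogonal_of_restrict_nondegenerate hrefl
      (nondegenerate_restrict_of_disjoint_orthogonal B hrefl hdisj)
  have hndP : (B.restrict (B.orthogonal P)).Nondegenerate := by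
    refine nondegenerate_restrict_of_disjoint_orthogonal B hrefl ?_
    rw [orthogonal_orthogonal hnd hrefl]
    exact hcompl.disjoint.symm
  have hdim := Submodule.finrank_add_eq_of_isCompl hcompl
  obtain ⟨k, hk⟩ :=
    ih _ (by omega) (B := B.restrict (B.orthogonal P)) (fun z => hB z) hndP rfl
  exact ⟨k + 1, by omega⟩

theorem IsAlt.even_finrank_range [FiniteDimensional K V] {B : LinearMap.BilinForm K V}
    (hB : B.IsAlt) : Even (finrank K (LinearMap.range B)) := by
  obtain ⟨U, hU⟩ := (LinearMap.ker B).exists_isCompl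
  have hker : LinearMap.ker (B.restrict U) = ⊥ := by
    rw [ker_restrict_eq_of_codisjoint hU.symm.codisjoint, ← Submodule.disjoint_iff_comap_eq_bot]
    · exact hU.symm.disjoint
    · intro x _ y hy
      exact hB.isRefl y x (LinearMap.congr_fun hy x)
  have hU_even : Even (finrank K U) :=
    IsAlt.even_finrank_of_nondegenerate (B := B.restrict U) (fun z => hB z)
      (nondegenerate_iff_ker_eq_bot.mpr hker)
  have := LinearMap.finrank_range_add_finrank_ker B
  have := Submodule.finrank_add_eq_of_isCompl hU
  rwa [show finrank K (LinearMap.range B) = finrank K U by omega]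

theorem isAlt_of_map_add_eq [CharP K 2] {Q : V → K} {B : LinearMap.BilinForm K V}
    (hQ : ∀ x y, Q (x + y) = Q x + Q y + B x y) : B.IsAlt := by
  have hV (x : V) : x + x = 0 := by rw [← two_smul K x, CharTwo.two_eq_zero, zero_smul]
  have hQ0 : Q 0 = 0 := by simpa [CharTwo.add_self_eq_zero] using hQ 0 0
  intro x
  simpa [hV, hQ0, CharTwo.add_self_eq_zero] using (hQ x x).symm

end LinearMap.BilinForm

namespace AddMonoidHom

variable {F V : Type*} [Field F] [Finite F] [AddCommGroup V] [Module F V]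
  {f : V →+ F} {W : Submodule F V}

theorem bijective_smul_of_ker_eq (hW : f.ker = W.toAddSubgroup) {z : V} (hz : f z ≠ 0) :
    Function.Bijective fun a : F => f (a • z) := by
  have hinj : Function.Injective fun a : F => f (a • z) := by
    refine (injective_iff_map_eq_zero
      (f.comp (LinearMap.toSpanSingleton F V z).toAddMonoidHom)).mpr fun a ha => ?_
    by_contra ha0
    have haz : a • z ∈ W := by rw [← Submodule.mem_toAddSubgroup, ← hW]; exact ha
    exact hz (show z ∈ f.ker by rwa [hW, Submodule.mem_toAddSubgroup, W.smul_mem_iff ha0] at *)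
  exact ⟨hinj, Finite.injective_iff_surjective.mp hinj⟩

theorem surjective_of_ker_eq (hW : f.ker = W.toAddSubgroup) (hf : f ≠ 0) :
    Function.Surjective f := by
  obtain ⟨z, hz⟩ := DFunLike.ne_iff.mp hf
  intro a
  obtain ⟨b, hb⟩ := (bijective_smul_of_ker_eq hW hz).2 a
  exact ⟨b • z, hb⟩

theorem finrank_add_one_of_ker_eq [FiniteDimensional F V] (hW : f.ker = W.toAddSubgroup)
    (hf : f ≠ 0) : finrank F W + 1 = finrank F V := by
  obtain ⟨z, hz⟩ := DFunLike.ne_iff.mp hf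
  have hbij := bijective_smul_of_ker_eq hW hz
  have hmem (x : V) : x ∈ W ↔ f x = 0 := by
    rw [← Submodule.mem_toAddSubgroup, ← hW, mem_ker]
  have hcompl : IsCompl W (F ∙ z) := by
    constructor
    · rw [Submodule.disjoint_def]
      rintro x hxW hxz
      obtain ⟨a, rfl⟩ := Submodule.mem_span_singleton.mp hxz
      rw [hbij.1 (((hmem _).mp hxW).trans (by simp) : f (a • z) = f ((0 : F) • z)), zero_smul]
    · rw [codisjoint_iff, eq_top_iff]
      intro x _
      obtain ⟨b, hb⟩ := hbij.2 (f x)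
      have hxW : x - b • z ∈ W := (hmem _).mpr (by simp [hb])
      have hbz : b • z ∈ F ∙ z := (F ∙ z).smul_mem b (Submodule.mem_span_singleton_self z)
      simpa using Submodule.add_mem_sup hxW hbz
  rw [← Submodule.finrank_add_eq_of_isCompl hcompl, finrank_span_singleton]
  rintro rfl
  simp at hz

end AddMonoidHom

namespace AddChar

variable {R : Type*} [CommRing R] [IsDomain R]

theorem sum_apply_comp_eq_zero_of_surjective {A B : Type*} [AddGroup A] [Fintype A] [AddGroup B]
    {ψ : AddChar B R} (hψ : ψ ≠ 1) {f : A →+ B} (hf : Function.Surjective f) :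
    ∑ a, ψ (f a) = 0 := by
  refine sum_eq_zero_of_ne_one (ψ := ψ.compAddMonoidHom f) fun h => hψ ?_
  exact compAddMonoidHom_injective_left f hf (h.trans (by ext; simp))

variable {F V : Type*} [Field F] [AddCommGroup V] [Module F V] [Fintype V] {ψ : AddChar F R}

theorem sum_apply_linearMap_eq_zero (hψ : ψ ≠ 1) {f : V →ₗ[F] F} (hf : f ≠ 0) :
    ∑ y, ψ (f y) = 0 :=
  sum_apply_comp_eq_zero_of_surjective (f := f.toAddMonoidHom) hψ
    (LinearMap.surjective_of_ne_zero hf)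

theorem sum_apply_mul_sum_apply_neg_eq_card_mul_sum_ker (hψ : ψ ≠ 1) {Q : V → F}
    {Bl : V →ₗ[F] V →ₗ[F] F} (hQ : ∀ x y, Q (x + y) = Q x + Q y + Bl x y)
    [Fintype (LinearMap.ker Bl)] :
    (∑ x, ψ (Q x)) * ∑ x, ψ (-Q x) = Fintype.card V * ∑ z : LinearMap.ker Bl, ψ (Q z) := by
  classical
  have hinner (z : V) :
      ∑ y, ψ (Bl z y) = if z ∈ LinearMap.ker Bl then (Fintype.card V : R) else 0 := by
    split_ifs with hz
    · simp [LinearMap.mem_ker.mp hz]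
    · exact sum_apply_linearMap_eq_zero hψ hz
  calc (∑ x, ψ (Q x)) * ∑ y, ψ (-Q y)
      = ∑ y, ∑ z, ψ (Q (z + y)) * ψ (-Q y) := by
        rw [sum_mul_sum, sum_comm]
        exact sum_congr rfl fun y _ =>
          (Fintype.sum_equiv (Equiv.addRight y) _ _ fun z => rfl).symm
    _ = ∑ z, ψ (Q z) * ∑ y, ψ (Bl z y) := by
        rw [sum_comm]
        refine sum_congr rfl fun z _ => ?_
        rw [mul_sum]
        refine sum_congr rfl fun y _ => ?_
        rw [← map_add_eq_mul, ← map_add_eq_mul, hQ]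
        ring_nf
    _ = ∑ z ∈ univ.filter (· ∈ LinearMap.ker Bl), ψ (Q z) * Fintype.card V := by
        simp_rw [hinner, mul_ite, mul_zero, sum_filter]
    _ = Fintype.card V * ∑ z : LinearMap.ker Bl, ψ (Q z) := by
        rw [sum_subtype _ (p := (· ∈ LinearMap.ker Bl)) (by simp), mul_sum]
        exact sum_congr rfl fun z _ => mul_comm _ _

theorem sum_ker_eq_card_or_eq_zero [Finite F] (hψ : ψ ≠ 1) {Q : V → F}
    {Bl : V →ₗ[F] V →ₗ[F] F} (hQ : ∀ x y, Q (x + y) = Q x + Q y + Bl x y)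
    {W : Submodule F V} (hW : ∀ x, x ∈ W ↔ x ∈ LinearMap.ker Bl ∧ Q x = 0) [Fintype (LinearMap.ker Bl)] :
    (W = LinearMap.ker Bl ∧
        ∑ z : LinearMap.ker Bl, ψ (Q z) = Fintype.card (LinearMap.ker Bl)) ∨
      (finrank F W + 1 = finrank F (LinearMap.ker Bl) ∧
        ∑ z : LinearMap.ker Bl, ψ (Q z) = 0) := by
  let f : LinearMap.ker Bl →+ F :=
    AddMonoidHom.mk' (fun z => Q z) fun a b => by simp [hQ, LinearMap.mem_ker.mp a.2]
  have hWR : W ≤ LinearMap.ker Bl := fun x hx => ((hW x).mp hx).1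
  have hker : f.ker = (W.comap (LinearMap.ker Bl).subtype).toAddSubgroup := by
    ext z
    simp [f, hW, z.2]
  by_cases hf : f = 0
  · left
    have hQ0 (z : LinearMap.ker Bl) : Q z = 0 := DFunLike.congr_fun hf z
    refine ⟨le_antisymm hWR fun x hx => (hW x).mpr ⟨hx, hQ0 ⟨x, hx⟩⟩, ?_⟩
    simp [hQ0]
  · right
    refine ⟨?_, sum_apply_comp_eq_zero_of_surjective hψ (f.surjective_of_ker_eq hker hf)⟩
    rw [← f.finrank_add_one_of_ker_eq hker hf, (Submodule.comapSubtypeEquivOfLe hWR).finrank_eq]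

end AddChar

theorem pos_of_card_eq_two_pow {F : Type*} [Fintype F] [Nontrivial F] {e : ℕ}
    (hF : Fintype.card F = 2 ^ e) : 0 < e := by
  have := Fintype.one_lt_card (α := F)
  rw [hF] at this
  exact Nat.pos_of_ne_zero fun h => by simp [h] at this

theorem eq_mul_finrank_of_card_eq_two_pow {F V : Type*} [Field F] [Fintype F] [AddCommGroup V]
    [Module F V] [Fintype V] {e m : ℕ} (hF : Fintype.card F = 2 ^ e)
    (hV : Fintype.card V = 2 ^ m) : m = e * finrank F V := by
  have hcard := Module.card_eq_pow_finrank (K := F) (V := V)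
  rw [hF, hV, ← pow_mul] at hcard
  exact Nat.pow_right_injective le_rfl hcard

noncomputable def traceSignChar (F : Type*) [Field F] [Algebra (ZMod 2) F] : AddChar F ℤ where
  toFun a := (-1) ^ (Algebra.trace (ZMod 2) F a).val
  map_zero_eq_one' := by simp
  map_add_eq_mul' a b := by
    rw [map_add]
    generalize Algebra.trace (ZMod 2) F a = u
    generalize Algebra.trace (ZMod 2) F b = v
    revert u v
    decide

theorem traceSignChar_ne_one (F : Type*) [Field F] [Fintype F] [Algebra (ZMod 2) F] :
    traceSignChar F ≠ 1 := by
  obtain ⟨a, ha⟩ := Algebra.trace_surjective (ZMod 2) F 1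
  refine AddChar.ne_one_iff.mpr ⟨a, ?_⟩
  change (-1 : ℤ) ^ (Algebra.trace (ZMod 2) F a).val ≠ 1
  rw [ha]
  decide

theorem quadratic_exponential_sum_eval_general (m e : ℕ)
    (F K : Type*) [Field F] [Field K] [Algebra F K] [Fintype F] [Fintype K]
    [Algebra (ZMod 2) F]
    (hF : Fintype.card F = 2 ^ e) (hK : Fintype.card K = 2 ^ m)
    (Q : K → F) (B : K → K → F) (hB : ∀ x y, B x y = Q (x + y) + Q x + Q y)
    (Bl : K →ₗ[F] K →ₗ[F] F) (hBl : ∀ x y, Bl x y = B x y)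
    (W : Submodule F K)
    (hW : (W : Set K) = {x : K | (∀ y, B x y = 0) ∧ Q x = 0})
    (r : ℕ) (hr : r = m / e - Module.finrank F W) :
    (Odd r → ∑ x : K, (-1 : ℤ) ^ (Algebra.trace (ZMod 2) F (Q x)).val = 0) ∧
    (Even r → ∑ x : K, (-1 : ℤ) ^ (Algebra.trace (ZMod 2) F (Q x)).val = 2 ^ (m - e * (r / 2)) ∨
        ∑ x : K, (-1 : ℤ) ^ (Algebra.trace (ZMod 2) F (Q x)).val = -2 ^ (m - e * (r / 2))) := by
  have : CharP F 2 := charP_of_injective_ringHom (algebraMap (ZMod 2) F).injective 2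
  have hQ (x y : K) : Q (x + y) = Q x + Q y + Bl x y := by
    rw [hBl, hB]
    linear_combination (-(Q x + Q y)) * CharTwo.two_eq_zero (R := F)
  have hW' (x : K) : x ∈ W ↔ x ∈ LinearMap.ker Bl ∧ Q x = 0 := by
    rw [← SetLike.mem_coe, hW, LinearMap.mem_ker, LinearMap.ext_iff]
    simp [hBl]
  have hm := eq_mul_finrank_of_card_eq_two_pow hF hK
  rw [hm, Nat.mul_div_cancel_left _ (pos_of_card_eq_two_pow hF)] at hr
  have hrank := LinearMap.finrank_range_add_finrank_ker Bl
  obtain ⟨k, hk⟩ := (LinearMap.BilinForm.isAlt_of_map_add_eq hQ).even_finrank_range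
  have := Fintype.ofFinite (LinearMap.ker Bl)
  set S := ∑ x : K, (-1 : ℤ) ^ (Algebra.trace (ZMod 2) F (Q x)).val
  have hS : S * S = 2 ^ m * ∑ z : LinearMap.ker Bl, traceSignChar F (Q z) := by
    have := AddChar.sum_apply_mul_sum_apply_neg_eq_card_mul_sum_ker (traceSignChar_ne_one F) hQ
    simp only [CharTwo.neg_eq, hK, Nat.cast_pow, Nat.cast_ofNat] at this
    exact this
  rcases AddChar.sum_ker_eq_card_or_eq_zero (traceSignChar_ne_one F) hQ hW' with
    ⟨rfl, hsum⟩ | ⟨hdim, hsum⟩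
  · rw [hsum, Module.card_eq_pow_finrank (K := F), hF, ← pow_mul] at hS
    have hexp : m + e * finrank F (LinearMap.ker Bl) = (m - e * k) + (m - e * k) := by
      rw [hm, ← hrank, hk]; ring_nf; omega
    push_cast at hS
    rw [← pow_add, hexp, pow_add] at hS
    refine ⟨fun hodd => absurd hodd (Nat.not_odd_iff_even.mpr ⟨k, by omega⟩), fun _ => ?_⟩
    rw [show r / 2 = k by omega]
    exact mul_self_eq_mul_self_iff.mp hS
  · have hS0 : S = 0 := mul_self_eq_zero.mp (by rw [hS, hsum, mul_zero])
    exact ⟨fun _ => hS0, fun heven => absurd heven (Nat.not_even_iff_odd.mpr ⟨k, by omega⟩)⟩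

/-- Evaluation of a binary quadratic-form exponential sum: with `r` the rank of
the quadratic form `Q : K → F_{2^e}` (i.e. `m/e` minus the `F_{2^e}`-dimension
of `{x ∈ Rad(B) : Q x = 0}`), the sum `S = Σ_x (-1)^{Tr(Q x)}` is `0` if `r`
is odd and `±2^{m - e·r/2}` if `r` is even. -/
theorem quadratic_exponential_sum_eval (m e : ℕ) (hm : 0 < m) (he : 0 < e)
    (hem : e ∣ m)
    (F K : Type*) [Field F] [Field K] [Algebra F K] [Fintype F] [Fintype K]
    [Algebra (ZMod 2) F]
    (hF : Fintype.card F = 2 ^ e) (hK : Fintype.card K = 2 ^ m)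
    (Q : K → F) (B : K → K → F) (hB : ∀ x y, B x y = Q (x + y) + Q x + Q y)
    (Bl : K →ₗ[F] K →ₗ[F] F) (hBl : ∀ x y, Bl x y = B x y)
    (W : Submodule F K)
    (hW : (W : Set K) = {x : K | (∀ y, B x y = 0) ∧ Q x = 0})
    (r : ℕ) (hr : r = m / e - Module.finrank F W) :
    (Odd r → ∑ x : K, (-1 : ℤ) ^ (Algebra.trace (ZMod 2) F (Q x)).val = 0) ∧
    (Even r → ∑ x : K, (-1 : ℤ) ^ (Algebra.trace (ZMod 2) F (Q x)).val = 2 ^ (m - e * (r / 2)) ∨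
        ∑ x : K, (-1 : ℤ) ^ (Algebra.trace (ZMod 2) F (Q x)).val = -2 ^ (m - e * (r / 2))) :=
  quadratic_exponential_sum_eval_general m e F K hF hK Q B hB Bl hBl W hW r hr
end

section
/- Let m, d, e be positive integers with e = gcd(m,d) = gcd(m,2d), let u ≥ 1 and s ≥ u. Then the set of solutions (x_1, ..., x_{2u}) ∈ F_{2^m}^{2u} of the system Σ_{i=1}^{u} (x_{2i-1} x_{2i}^{2^{jd}} + x_{2i-1}^{2^{jd}} x_{2i}) = 0 for j = 1, ..., s coincides with the set of solutions of the same system restricted to j = 1, ..., u. -/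
open Finset

section Aux
variable {K : Type*} [Field K]

private def Bf (σ : K ≃+* K) {u : ℕ} (y z : Fin u → K) (n : ℤ) : K :=
  ∑ i, (y i * (σ ^ n) (z i) - (σ ^ n) (y i) * z i)

private lemma sigma_comp (σ : K ≃+* K) (a b : ℤ) (x : K) :
    (σ ^ a) ((σ ^ b) x) = (σ ^ (a + b)) x := by
  rw [zpow_add]; rfl

private lemma one_apply' (x : K) : (1 : K ≃+* K) x = x := rfl

private lemma Bf_zero (σ : K ≃+* K) {u : ℕ} (y z : Fin u → K) : Bf σ y z 0 = 0 := by
  simp [Bf, one_apply']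

private lemma Bf_neg (σ : K ≃+* K) {u : ℕ} (y z : Fin u → K) (n : ℤ) :
    Bf σ y z (-n) = - (σ ^ (-n)) (Bf σ y z n) := by
  simp only [Bf, map_sum, map_sub, map_mul, sigma_comp, neg_add_cancel, zpow_zero,
    one_apply', ← Finset.sum_neg_distrib]
  exact Finset.sum_congr rfl fun i _ => by ring

private lemma key (σ : K ≃+* K) {u N : ℕ} (y z : Fin u → K) (c : Fin N → K)
    (hy : ∀ i, ∑ j, c j * (σ ^ (j : ℤ)) (y i) = 0)
    (hz : ∀ i, ∑ j, c j * (σ ^ (j : ℤ)) (z i) = 0)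
    (k : ℤ) :
    ∑ j, c j * (σ ^ k) (Bf σ y z ((j : ℤ) - k)) = 0 := by
  have h1 : ∀ j : Fin N, c j * (σ ^ k) (Bf σ y z ((j : ℤ) - k))
      = ∑ i, (((σ ^ k) (y i) * (c j * (σ ^ (j : ℤ)) (z i)))
          - ((c j * (σ ^ (j : ℤ)) (y i)) * (σ ^ k) (z i))) := by
    intro j
    simp only [Bf, map_sum, map_sub, map_mul, sigma_comp,
      show k + ((j : ℤ) - k) = (j : ℤ) by ring, Finset.mul_sum]
    exact Finset.sum_congr rfl fun i _ => by ring
  rw [Finset.sum_congr rfl fun j _ => h1 j, Finset.sum_comm]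
  refine Finset.sum_eq_zero fun i _ => ?_
  rw [Finset.sum_sub_distrib, ← Finset.mul_sum, ← Finset.sum_mul, hy, hz]
  ring

private lemma aux (σ : K ≃+* K) {u : ℕ} (y z : Fin u → K)
    (hB : ∀ j : ℕ, 1 ≤ j → j ≤ u → Bf σ y z j = 0) :
    ∀ n : ℕ, Bf σ y z n = 0 := by
  classical
  set w : Fin (2 * u + 1) → (Fin u ⊕ Fin u → K) :=
    fun j => Sum.elim (fun i => (σ ^ (j : ℤ)) (y i)) (fun i => (σ ^ (j : ℤ)) (z i)) with hw
  have hdep : ¬ LinearIndependent K w := by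
    intro h
    have h2 := h.fintype_card_le_finrank
    rw [Module.finrank_pi] at h2
    simp at h2
    omega
  obtain ⟨g, hg0, j0, hj0⟩ := Fintype.not_linearIndependent_iff.mp hdep
  have hy : ∀ i, ∑ j, g j * (σ ^ (j : ℤ)) (y i) = 0 := by
    intro i
    have := congrFun hg0 (Sum.inl i)
    simpa [w, Finset.sum_apply] using this
  have hz : ∀ i, ∑ j, g j * (σ ^ (j : ℤ)) (z i) = 0 := by
    intro i
    have := congrFun hg0 (Sum.inr i)
    simpa [w, Finset.sum_apply] using this
  set S : Finset (Fin (2 * u + 1)) := Finset.univ.filter (fun j => g j ≠ 0) with hS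
  have hSne : S.Nonempty := ⟨j0, by simp [hS, hj0]⟩
  set t := S.max' hSne with ht
  have hct : g t ≠ 0 := by
    have := S.max'_mem hSne
    simp [hS] at this
    exact this
  have htop : ∀ j, g j ≠ 0 → j ≤ t := fun j hj => S.le_max' j (by simp [hS, hj])
  intro n
  induction n using Nat.strong_induction_on with
  | _ n IH =>
    rcases Nat.eq_zero_or_pos n with h0 | h1
    · subst h0; exact_mod_cast Bf_zero σ y z
    rcases le_or_gt n u with hle | hgt
    · exact hB n h1 hle
    have hBsmall : ∀ a : ℤ, a.natAbs < n → Bf σ y z a = 0 := by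
      intro a ha
      rcases le_or_gt 0 a with hpos | hneg
      · lift a to ℕ using hpos
        exact IH a (by simpa using ha)
      · have h3 : Bf σ y z (-(-a)) = - (σ ^ (-(-a))) (Bf σ y z (-a)) := Bf_neg σ y z (-a)
        rw [neg_neg] at h3
        have h4 : (-a) = ((a.natAbs : ℕ) : ℤ) := by omega
        have h5 : Bf σ y z (-a) = 0 := by rw [h4]; exact IH a.natAbs ha
        rw [h3, h5, map_zero, neg_zero]
    have hrel := key σ y z g hy hz ((t : ℤ) - n)
    have hvanish : ∀ j ∈ Finset.univ, j ≠ t →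
        g j * (σ ^ ((t : ℤ) - n)) (Bf σ y z ((j : ℤ) - ((t : ℤ) - n))) = 0 := by
      intro j _ hj
      by_cases hgj : g j = 0
      · simp [hgj]
      have hjt : (j : ℕ) < (t : ℕ) := by
        have := htop j hgj
        exact lt_of_le_of_ne this (by simpa [Fin.ext_iff] using hj)
      have ht2u : (t : ℕ) ≤ 2 * u := by omega
      have habs : ((j : ℤ) - ((t : ℤ) - n)).natAbs < n := by
        have hj' : ((j : ℕ) : ℤ) < ((t : ℕ) : ℤ) := by exact_mod_cast hjt
        have ht' : ((t : ℕ) : ℤ) ≤ 2 * u := by exact_mod_cast ht2u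
        have hn' : (u : ℤ) < n := by exact_mod_cast hgt
        omega
      rw [hBsmall _ habs, map_zero, mul_zero]
    rw [Finset.sum_eq_single t hvanish (by simp)] at hrel
    rw [show (t : ℤ) - ((t : ℤ) - n) = (n : ℤ) by ring] at hrel
    rcases mul_eq_zero.mp hrel with h | h
    · exact absurd h hct
    · exact (σ ^ ((t : ℤ) - n)).injective (h.trans (map_zero _).symm)

end Aux

/-- For `s ≥ u ≥ 1`, the solution set of the system
`Σ_{i=1}^u (x_{2i-1} x_{2i}^{2^{jd}} + x_{2i-1}^{2^{jd}} x_{2i}) = 0`,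
`j = 1,…,s`, coincides with that of the subsystem `j = 1,…,u`.
Here `y i, z i` denote the odd- and even-indexed entries of the `2u`-tuple. -/
theorem bilinear_system_stabilizes (m d e : ℕ)
    (hm : 0 < m) (hd : 0 < d) (he : 0 < e)
    (he1 : e = Nat.gcd m d) (he2 : e = Nat.gcd m (2 * d))
    (K : Type*) [Field K] [Fintype K] (hK : Fintype.card K = 2 ^ m)
    (u s : ℕ) (hu : 1 ≤ u) (hs : u ≤ s)
    (y z : Fin u → K) :
    (∀ j ∈ Finset.Icc 1 s,
        ∑ i : Fin u, (y i * z i ^ (2 ^ (j * d)) + y i ^ (2 ^ (j * d)) * z i) = 0) ↔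
    (∀ j ∈ Finset.Icc 1 u,
        ∑ i : Fin u, (y i * z i ^ (2 ^ (j * d)) + y i ^ (2 ^ (j * d)) * z i) = 0) := by
  -- char 2
  haveI : CharP K 2 := by
    set p := ringChar K with hp
    haveI : CharP K p := ringChar.charP K
    have hprime : p.Prime := (CharP.char_is_prime K p)
    obtain ⟨n, -, hcard⟩ := FiniteField.card K p
    rw [hK] at hcard
    have hdvd : p ∣ 2 ^ m := hcard ▸ dvd_pow_self p n.2.ne'
    have hp2 : p = 2 :=
      (Nat.prime_dvd_prime_iff_eq hprime Nat.prime_two).mp (hprime.dvd_of_dvd_pow hdvd)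
    rw [← hp2]; infer_instance
  constructor
  · intro h j hj
    exact h j (Finset.mem_Icc.mpr ⟨(Finset.mem_Icc.mp hj).1, le_trans (Finset.mem_Icc.mp hj).2 hs⟩)
  · intro h j hj
    haveI : Fact (Nat.Prime 2) := ⟨Nat.prime_two⟩
    set σ : K ≃+* K := iterateFrobeniusEquiv K 2 d with hσ
    have hσx : ∀ x : K, σ x = x ^ (2 ^ d) := by
      intro x
      rw [hσ, show (iterateFrobeniusEquiv K 2 d) x = iterateFrobenius K 2 d x from
        congrFun (coe_iterateFrobeniusEquiv K 2 d) x, iterateFrobenius_def]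
    have hpow : ∀ (a : ℕ) (x : K), (σ ^ (a : ℤ)) x = x ^ (2 ^ (a * d)) := by
      intro a
      induction a with
      | zero => intro x; simp [one_apply']
      | succ a ih =>
        intro x
        have : ((a : ℤ) + 1) = ((a + 1 : ℕ) : ℤ) := by push_cast; ring
        rw [show ((a + 1 : ℕ) : ℤ) = (a : ℤ) + 1 by push_cast; ring, zpow_add, zpow_one]
        rw [show (σ ^ (a : ℤ) * σ) x = (σ ^ (a : ℤ)) (σ x) from rfl, hσx, ih, ← pow_mul,
          ← pow_add]
        congr 1
        ring
    have hBf : ∀ a : ℕ, Bf σ y z a =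
        ∑ i : Fin u, (y i * z i ^ (2 ^ (a * d)) + y i ^ (2 ^ (a * d)) * z i) := by
      intro a
      unfold Bf
      refine Finset.sum_congr rfl fun i _ => ?_
      rw [hpow, hpow, CharTwo.sub_eq_add]
    have hB : ∀ a : ℕ, 1 ≤ a → a ≤ u → Bf σ y z a = 0 := by
      intro a h1 h2
      rw [hBf]
      exact h a (Finset.mem_Icc.mpr ⟨h1, h2⟩)
    have := aux σ y z hB j
    rw [hBf] at this
    exact this
end

section
/- Let m, d be positive integers and u, s ≥ 1. A tuple (x_1,...,x_{2u}) ∈ F_{2^m}^{2u} satisfies Σ_{i=1}^{u}(x_{2i-1} x_{2i}^{2^{jd}} + x_{2i-1}^{2^{jd}} x_{2i}) = 0 for j = 1,...,s if and only if it satisfies Σ_{i=1}^{u}(x_{2i-1} x_{2i}^{2^{d}} + x_{2i-1}^{2^{d}} x_{2i}) = 0 together with Σ_{i=1}^{u}(x̃_{2i-1} x̃_{2i}^{2^{jd}} + x̃_{2i-1}^{2^{jd}} x̃_{2i}) = 0 for j = 1,...,s-1, where x̃_i = x_i + x_i^{2^d}. -/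
open Finset

private def Fsum {K : Type*} [Field K] {u : ℕ} (d : ℕ) (y z : Fin u → K) (j : ℕ) : K :=
  ∑ i : Fin u, (y i * z i ^ (2 ^ (j * d)) + y i ^ (2 ^ (j * d)) * z i)

private lemma Fsum_zero {K : Type*} [Field K] [CharP K 2] {u : ℕ} (d : ℕ) (y z : Fin u → K) :
    Fsum d y z 0 = 0 := by
  simp [Fsum, CharTwo.add_self_eq_zero]

private lemma key_id {K : Type*} [Field K] [CharP K 2] {u : ℕ} (d : ℕ) (y z : Fin u → K)
    (k : ℕ) :
    ∑ i : Fin u, ((y i + y i ^ (2 ^ d)) * (z i + z i ^ (2 ^ d)) ^ (2 ^ ((k + 1) * d)) +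
        (y i + y i ^ (2 ^ d)) ^ (2 ^ ((k + 1) * d)) * (z i + z i ^ (2 ^ d)))
      = Fsum d y z (k + 2) + Fsum d y z (k + 1)
        + (Fsum d y z (k + 1)) ^ (2 ^ d) + (Fsum d y z k) ^ (2 ^ d) := by
  haveI : Fact (Nat.Prime 2) := ⟨Nat.prime_two⟩
  simp only [Fsum, sum_pow_char_pow]
  rw [← Finset.sum_add_distrib, ← Finset.sum_add_distrib, ← Finset.sum_add_distrib]
  refine Finset.sum_congr rfl fun i _ => ?_
  have e1 : 2 ^ ((k + 1) * d) = 2 ^ (k * d) * 2 ^ d := by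
    rw [add_mul, one_mul, pow_add]
  have e2 : 2 ^ ((k + 2) * d) = 2 ^ (k * d) * 2 ^ d * 2 ^ d := by
    rw [add_mul, pow_add, two_mul, pow_add, mul_assoc]
  rw [add_pow_char_pow (z i), add_pow_char_pow (y i),
    add_pow_char_pow (y i * z i ^ 2 ^ ((k+1)*d)), add_pow_char_pow (y i * z i ^ 2 ^ (k*d)),
    mul_pow, mul_pow, mul_pow, mul_pow, e1, e2]
  generalize 2 ^ (k * d) = E
  generalize 2 ^ d = Q
  ring

/-- The system `Σ_i (x_{2i-1} x_{2i}^{2^{jd}} + x_{2i-1}^{2^{jd}} x_{2i}) = 0`,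
`j = 1,…,s`, is equivalent to the first equation (`j = 1`) together with the
same system for `j = 1,…,s-1` in the variables `x̃_i = x_i + x_i^{2^d}`. -/
theorem bilinear_system_elimination (m d : ℕ) (hm : 0 < m) (hd : 0 < d)
    (K : Type*) [Field K] [Fintype K] (hK : Fintype.card K = 2 ^ m)
    (u s : ℕ) (hu : 1 ≤ u) (hs : 1 ≤ s)
    (y z : Fin u → K) :
    (∀ j ∈ Finset.Icc 1 s,
        ∑ i : Fin u, (y i * z i ^ (2 ^ (j * d)) + y i ^ (2 ^ (j * d)) * z i) = 0) ↔
    ((∑ i : Fin u, (y i * z i ^ (2 ^ d) + y i ^ (2 ^ d) * z i) = 0) ∧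
      ∀ j ∈ Finset.Icc 1 (s - 1),
        ∑ i : Fin u, ((y i + y i ^ (2 ^ d)) * (z i + z i ^ (2 ^ d)) ^ (2 ^ (j * d)) +
          (y i + y i ^ (2 ^ d)) ^ (2 ^ (j * d)) * (z i + z i ^ (2 ^ d))) = 0) := by
  haveI h2 : CharP K 2 := by
    haveI : CharP K (ringChar K) := ringChar.charP K
    obtain ⟨n, hp, hc⟩ := FiniteField.card K (ringChar K)
    have hdvd : ringChar K ∣ 2 ^ m := hK ▸ hc ▸ dvd_pow_self _ n.ne_zero
    have := (Nat.prime_dvd_prime_iff_eq hp Nat.prime_two).mp (hp.dvd_of_dvd_pow hdvd)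
    exact this ▸ ringChar.charP K
  have hFdef : ∀ j : ℕ, Fsum d y z j
      = ∑ i : Fin u, (y i * z i ^ (2 ^ (j * d)) + y i ^ (2 ^ (j * d)) * z i) := fun _ => rfl
  constructor
  · intro h
    have hF : ∀ j, 1 ≤ j → j ≤ s → Fsum d y z j = 0 := fun j h1 h2 =>
      (hFdef j).symm ▸ h j (Finset.mem_Icc.mpr ⟨h1, h2⟩)
    constructor
    · have := hF 1 le_rfl hs
      rw [hFdef] at this
      simpa using this
    · intro j hj
      rw [Finset.mem_Icc] at hj
      obtain ⟨k, rfl⟩ : ∃ k, j = k + 1 := ⟨j - 1, (Nat.succ_pred_eq_of_pos hj.1).symm⟩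
      rw [key_id]
      have h0 : Fsum d y z k = 0 := by
        rcases Nat.eq_zero_or_pos k with rfl | hk
        · exact Fsum_zero d y z
        · exact hF k hk (by omega)
      rw [hF (k + 2) (by omega) (by omega), hF (k + 1) (by omega) (by omega), h0]
      simp
  · rintro ⟨h1, hG⟩
    have main : ∀ j, 1 ≤ j → j ≤ s → Fsum d y z j = 0 := by
      intro j
      induction j using Nat.strong_induction_on with
      | _ j ih =>
        intro hj1 hjs
        match j, hj1 with
        | 1, _ =>
          rw [hFdef]
          simpa using h1
        | (k + 2), _ =>
          have hG' := hG (k + 1) (Finset.mem_Icc.mpr ⟨by omega, by omega⟩)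
          rw [key_id] at hG'
          have e1 : Fsum d y z (k + 1) = 0 := ih (k + 1) (by omega) (by omega) (by omega)
          have e0 : Fsum d y z k = 0 := by
            rcases Nat.eq_zero_or_pos k with rfl | hk
            · exact Fsum_zero d y z
            · exact ih k (by omega) hk (by omega)
          rw [e1, e0] at hG'
          simpa using hG'
    intro j hj
    rw [Finset.mem_Icc] at hj
    rw [← hFdef]
    exact main j hj.1 hj.2
end
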